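/- (Proposition 3.1(1).) Let 0 < ε₀ ≤ κ ≤ 1 and let f : [0,∞) → ℝ be bounded and continuous with f(0) = 0, twice continuously differentiable on (0,∞), with f' ≥ 0 and f'' ≤ 0 on (0,2]. Define J(r) := inf_{x,y ∈ ℝ^d, |x−y| = r} μ_{x,y,x−y}(ℝ^d). Then for all x, y ∈ ℝ^d with 0 < |x−y| ≤ ε₀, with h_f(x,y) := f(|x−y|): L̃ h_f(x,y) ≤ (1/2) J(|x−y|) (f(2|x−y|) − 2 f(|x−y|)) + (∫_{|z|≤1} |c(x,z) − c(y,z)| |z|² ν(dz)) · f'(|x−y|)/|x−y| + 2 ν({z : |z| > 1}) (sup_{x ∈ ℝ^d, |z| > 1} c(x,z)) ‖f‖_∞. -/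

import Mathlib

open MeasureTheory Set
open scoped ENNReal RealInnerProductSpace

set_option maxHeartbeats 1000000

noncomputable section

/-- `ℝ^d` as a Euclidean space. -/
abbrev Ed (d : ℕ) := EuclideanSpace ℝ (Fin d)

/-- A Lévy measure on `ℝ^d`. -/
def IsLevyMeasure {d : ℕ} (ν : Measure (Ed d)) : Prop :=
  ν {0} = 0 ∧ ∫⁻ z, ENNReal.ofReal (min 1 (‖z‖ ^ 2)) ∂ν < ⊤

/-- `ν_u := ν ∧ (δ_u ∗ ν)`. -/
def nuShift {d : ℕ} (ν : Measure (Ed d)) (u : Ed d) : Measure (Ed d) :=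
  ν ⊓ ν.map (fun w => w + u)

/-- `c(x,y,u,z) = min(c(x,z), c(y,z), c(x,z−u), c(y,z−u))`. -/
def cmin {d : ℕ} (c : Ed d → Ed d → ℝ) (x y u z : Ed d) : ℝ :=
  min (min (c x z) (c y z)) (min (c x (z - u)) (c y (z - u)))

/-- `μ_{x,y,u}(dz) = c(x,y,u,z) ν_u(dz)`. -/
def muXYU {d : ℕ} (ν : Measure (Ed d)) (c : Ed d → Ed d → ℝ) (x y u : Ed d) :
    Measure (Ed d) :=
  (nuShift ν u).withDensity (fun z => ENNReal.ofReal (cmin c x y u z))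

/-- `ν̃_{x,y}(dz) = min(c(x,z), c(y,z)) ν(dz)`. -/
def nuTilde {d : ℕ} (ν : Measure (Ed d)) (c : Ed d → Ed d → ℝ) (x y : Ed d) :
    Measure (Ed d) :=
  ν.withDensity (fun z => ENNReal.ofReal (min (c x z) (c y z)))

/-- `c̃(x,y,z) = c(x,z) − min(c(x,z), c(y,z))`. -/
def ctilde {d : ℕ} (c : Ed d → Ed d → ℝ) (x y z : Ed d) : ℝ :=
  c x z - min (c x z) (c y z)

/-- `(x−y)_κ = min(1, κ/|x−y|) (x−y)`. -/
def kap {d : ℕ} (κ : ℝ) (v : Ed d) : Ed d := (min 1 (κ / ‖v‖)) • v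


/-- The operator `L̃_C` (the first three integrals of the coupling operator `L̃`)
applied to `h_f(x,y) = f(|x−y|)`, whose gradients are
`∇_x h_f(x,y) = f'(|x−y|)(x−y)/|x−y| = −∇_y h_f(x,y)`. -/
def LCdist {d : ℕ} (ν : Measure (Ed d)) (c : Ed d → Ed d → ℝ) (κ : ℝ)
    (f : ℝ → ℝ) (x y : Ed d) : ℝ :=
  (1 / 2) * ∫ z, (f ‖x + z - (y + z + kap κ (x - y))‖ - f ‖x - y‖
      - (if ‖z‖ ≤ 1 then (deriv f ‖x - y‖ / ‖x - y‖) * ⟪x - y, z⟫ else 0)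
      - (if ‖z + kap κ (x - y)‖ ≤ 1 then
          -((deriv f ‖x - y‖ / ‖x - y‖) * ⟪x - y, z + kap κ (x - y)⟫) else 0))
      ∂(muXYU ν c x y (kap κ (y - x)))
  + (1 / 2) * ∫ z, (f ‖x + z - (y + z + kap κ (y - x))‖ - f ‖x - y‖
      - (if ‖z‖ ≤ 1 then (deriv f ‖x - y‖ / ‖x - y‖) * ⟪x - y, z⟫ else 0)
      - (if ‖z + kap κ (y - x)‖ ≤ 1 then
          -((deriv f ‖x - y‖ / ‖x - y‖) * ⟪x - y, z + kap κ (y - x)⟫) else 0))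
      ∂(muXYU ν c x y (kap κ (x - y)))
  + (∫ z, (f ‖x + z - (y + z)‖ - f ‖x - y‖
      - (if ‖z‖ ≤ 1 then (deriv f ‖x - y‖ / ‖x - y‖) * ⟪x - y, z⟫ else 0)
      - (if ‖z‖ ≤ 1 then -((deriv f ‖x - y‖ / ‖x - y‖) * ⟪x - y, z⟫) else 0))
      ∂(nuTilde ν c x y - (2⁻¹ : ℝ≥0∞) • muXYU ν c x y (kap κ (x - y))
          - (2⁻¹ : ℝ≥0∞) • muXYU ν c x y (kap κ (y - x))))

/-- The operator `L̃_R` (the last two integrals of the coupling operator `L̃`)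
applied to `h_f(x,y) = f(|x−y|)`. -/
def LRdist {d : ℕ} (ν : Measure (Ed d)) (c : Ed d → Ed d → ℝ)
    (f : ℝ → ℝ) (x y : Ed d) : ℝ :=
  (∫ z, (f ‖x + z - y‖ - f ‖x - y‖
      - (if ‖z‖ ≤ 1 then (deriv f ‖x - y‖ / ‖x - y‖) * ⟪x - y, z⟫ else 0))
      * ctilde c x y z ∂ν)
  + (∫ z, (f ‖x - (y + z)‖ - f ‖x - y‖
      - (if ‖z‖ ≤ 1 then -((deriv f ‖x - y‖ / ‖x - y‖) * ⟪x - y, z⟫) else 0))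
      * ctilde c y x z ∂ν)

/-- `J(r) := inf_{x,y : |x−y| = r} μ_{x,y,x−y}(ℝ^d)`. -/
def Jfun (d : ℕ) (ν : Measure (Ed d)) (c : Ed d → Ed d → ℝ) (r : ℝ) : ℝ :=
  sInf {m : ℝ | ∃ x y : Ed d, ‖x - y‖ = r ∧ m = (muXYU ν c x y (x - y) Set.univ).toReal}



section Helpers
variable {d : ℕ}

lemma levy_outer {ν : Measure (Ed d)} (hν : IsLevyMeasure ν) {ε : ℝ} (hε : 0 < ε) :
    ν {z : Ed d | ε ≤ ‖z‖} < ⊤ := by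
  set S : Set (Ed d) := {z | ε ≤ ‖z‖} with hSdef
  have hS : MeasurableSet S := measurableSet_le measurable_const measurable_norm
  have h1 : ENNReal.ofReal (min 1 (ε ^ 2)) * ν S ≤ ∫⁻ z, ENNReal.ofReal (min 1 (‖z‖ ^ 2)) ∂ν := by
    calc ENNReal.ofReal (min 1 (ε ^ 2)) * ν S = ∫⁻ _ in S, ENNReal.ofReal (min 1 (ε ^ 2)) ∂ν := by
          rw [setLIntegral_const]
      _ ≤ ∫⁻ z in S, ENNReal.ofReal (min 1 (‖z‖ ^ 2)) ∂ν := by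
          refine setLIntegral_mono (by fun_prop) (fun z hz => ?_)
          exact ENNReal.ofReal_le_ofReal (min_le_min le_rfl (by nlinarith [hz.out, hε.le]))
      _ ≤ _ := setLIntegral_le_lintegral _ _
  have hpos : (0:ℝ≥0∞) < ENNReal.ofReal (min 1 (ε ^ 2)) := by
    rw [ENNReal.ofReal_pos]; exact lt_min one_pos (by positivity)
  by_contra h
  rw [not_lt, top_le_iff] at h
  rw [h, ENNReal.mul_top hpos.ne'] at h1
  exact absurd (top_le_iff.mp h1) (by simpa using hν.2.ne)

lemma nuShift_le_left {ν : Measure (Ed d)} {u : Ed d} : nuShift ν u ≤ ν := inf_le_left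
lemma nuShift_le_right {ν : Measure (Ed d)} {u : Ed d} :
    nuShift ν u ≤ ν.map (fun w => w + u) := inf_le_right

lemma nuShift_finite {ν : Measure (Ed d)} (hν : IsLevyMeasure ν) {u : Ed d} (hu : u ≠ 0) :
    IsFiniteMeasure (nuShift ν u) := by
  have hu' : 0 < ‖u‖ := by simpa using hu
  set B : Set (Ed d) := {z | ‖z‖ < ‖u‖ / 2} with hB
  have hBm : MeasurableSet B := measurableSet_lt measurable_norm measurable_const
  have h1 : nuShift ν u B < ⊤ := by
    refine lt_of_le_of_lt (le_trans (nuShift_le_right B) ?_) (levy_outer hν (by linarith : (0:ℝ) < ‖u‖/2))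
    rw [Measure.map_apply (measurable_add_const u) hBm]
    refine measure_mono (fun w hw => ?_)
    simp only [mem_preimage, hB, mem_setOf_eq] at hw ⊢
    have h2 := norm_sub_le (w + u) w
    rw [add_sub_cancel_left] at h2
    linarith
  have h2 : nuShift ν u Bᶜ < ⊤ := by
    refine lt_of_le_of_lt (le_trans (nuShift_le_left Bᶜ) ?_) (levy_outer hν (by linarith : (0:ℝ) < ‖u‖/2))
    refine measure_mono (fun w hw => ?_)
    simp only [mem_compl_iff, hB, mem_setOf_eq, not_lt] at hw
    exact hw
  constructor
  calc nuShift ν u univ ≤ nuShift ν u B + nuShift ν u Bᶜ := by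
        rw [← union_compl_self B] ; exact measure_union_le _ _
    _ < ⊤ := ENNReal.add_lt_top.mpr ⟨h1, h2⟩

lemma map_inf_equiv {α : Type*} [MeasurableSpace α] (e : α ≃ᵐ α) (μ₁ μ₂ : Measure α) :
    (μ₁ ⊓ μ₂).map e = μ₁.map e ⊓ μ₂.map e := by
  refine le_antisymm (le_inf (Measure.map_mono inf_le_left e.measurable)
    (Measure.map_mono inf_le_right e.measurable)) ?_
  have h : ((μ₁.map e ⊓ μ₂.map e).map e.symm).map e ≤ (μ₁ ⊓ μ₂).map e := by
    refine Measure.map_mono (le_inf ?_ ?_) e.measurable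
    · calc (μ₁.map e ⊓ μ₂.map e).map e.symm ≤ (μ₁.map e).map e.symm :=
          Measure.map_mono inf_le_left e.symm.measurable
        _ = μ₁ := e.map_symm_map
    · calc (μ₁.map e ⊓ μ₂.map e).map e.symm ≤ (μ₂.map e).map e.symm :=
          Measure.map_mono inf_le_right e.symm.measurable
        _ = μ₂ := e.map_symm_map
  rwa [e.map_map_symm] at h

lemma withDensity_map_equiv {α : Type*} [MeasurableSpace α] (e : α ≃ᵐ α) (μ : Measure α)
    {g : α → ℝ≥0∞} (hg : Measurable g) :
    (μ.withDensity g).map e = (μ.map e).withDensity (g ∘ e.symm) := by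
  ext s hs
  rw [Measure.map_apply e.measurable hs, withDensity_apply _ (e.measurable hs),
    withDensity_apply _ hs, setLIntegral_map hs (hg.comp e.symm.measurable) e.measurable]
  refine setLIntegral_congr_fun (e.measurable hs) (fun z hz => ?_)
  simp

lemma measurable_cmin {c : Ed d → Ed d → ℝ}
    (hc : Continuous (fun p : Ed d × Ed d => c p.1 p.2)) (x y u : Ed d) :
    Measurable (cmin c x y u) := by
  have h1 : ∀ v : Ed d, Continuous (fun z => c v z) := fun v =>
    hc.comp (Continuous.prodMk_right v)
  unfold cmin
  fun_prop (disch := exact fun _ h => h)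

lemma cmin_shift (c : Ed d → Ed d → ℝ) (x y u z : Ed d) :
    cmin c x y u (z + u) = cmin c x y (-u) z := by
  unfold cmin
  rw [add_sub_cancel_right, sub_neg_eq_add, min_comm]

lemma muXYU_map {ν : Measure (Ed d)} {c : Ed d → Ed d → ℝ}
    (hc : Continuous (fun p : Ed d × Ed d => c p.1 p.2)) (x y u : Ed d) :
    (muXYU ν c x y u).map (fun z => z + (-u)) = muXYU ν c x y (-u) := by
  have hg : Measurable (fun z => ENNReal.ofReal (cmin c x y u z)) :=
    (measurable_cmin hc x y u).ennreal_ofReal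
  have he : (fun z : Ed d => z + (-u)) = ⇑(MeasurableEquiv.addRight (-u)) := rfl
  rw [muXYU, he, withDensity_map_equiv _ _ hg]
  have hsymm : (MeasurableEquiv.addRight (-u : Ed d)).symm = MeasurableEquiv.addRight u := by
    rw [MeasurableEquiv.symm_addRight, neg_neg]
  congr 1
  · rw [nuShift, map_inf_equiv]
    have h1 : ν.map (⇑(MeasurableEquiv.addRight (-u : Ed d))) = ν.map (fun w => w + (-u)) := rfl
    have h2 : (ν.map (fun w => w + u)).map (⇑(MeasurableEquiv.addRight (-u : Ed d))) = ν := by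
      rw [show (⇑(MeasurableEquiv.addRight (-u : Ed d))) = (fun w : Ed d => w + (-u)) from rfl,
        Measure.map_map (measurable_add_const (-u)) (measurable_add_const u)]
      simp [Function.comp_def]
    rw [h1, h2, inf_comm]
    rfl
  · funext z
    simp only [Function.comp_apply, hsymm]
    show ENNReal.ofReal (cmin c x y u (z + u)) = ENNReal.ofReal (cmin c x y (-u) z)
    rw [cmin_shift]

lemma muXYU_mass_eq {ν : Measure (Ed d)} {c : Ed d → Ed d → ℝ}
    (hc : Continuous (fun p : Ed d × Ed d => c p.1 p.2)) (x y u : Ed d) :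
    muXYU ν c x y u univ = muXYU ν c x y (-u) univ := by
  rw [← muXYU_map hc x y u, Measure.map_apply (measurable_add_const (-u)) MeasurableSet.univ,
    preimage_univ]

lemma muXYU_finite {ν : Measure (Ed d)} (hν : IsLevyMeasure ν) {c : Ed d → Ed d → ℝ}
    {cUp : ℝ} (hcUp : ∀ x z, c x z ≤ cUp) (x y : Ed d) {u : Ed d} (hu : u ≠ 0) :
    IsFiniteMeasure (muXYU ν c x y u) := by
  have h := nuShift_finite hν hu
  constructor
  rw [muXYU, withDensity_apply _ MeasurableSet.univ, Measure.restrict_univ]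
  calc ∫⁻ z, ENNReal.ofReal (cmin c x y u z) ∂(nuShift ν u)
      ≤ ∫⁻ _, ENNReal.ofReal cUp ∂(nuShift ν u) := by
        refine lintegral_mono (fun z => ENNReal.ofReal_le_ofReal ?_)
        exact le_trans (min_le_left _ _) (le_trans (min_le_left _ _) (hcUp x z))
    _ < ⊤ := by
        rw [lintegral_const]
        exact ENNReal.mul_lt_top ENNReal.ofReal_lt_top (measure_lt_top _ _)

lemma integrable_of_bdd {μ : Measure (Ed d)} [IsFiniteMeasure μ] {g : Ed d → ℝ} {C : ℝ}
    (hm : Measurable g) (hb : ∀ z, |g z| ≤ C) : Integrable g μ :=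
  (integrable_const C).mono' hm.aestronglyMeasurable
    (Filter.Eventually.of_forall (fun z => by simpa [Real.norm_eq_abs] using hb z))

lemma LC_eval {ν : Measure (Ed d)} (hν : IsLevyMeasure ν) {c : Ed d → Ed d → ℝ}
    (hc : Continuous (fun p : Ed d × Ed d => c p.1 p.2))
    {cUp : ℝ} (hcUp : ∀ x z, c x z ≤ cUp)
    {f : ℝ → ℝ} (hf0 : f 0 = 0) {κ : ℝ} (x y : Ed d)
    (hxy : 0 < ‖x - y‖) (hκ : ‖x - y‖ ≤ κ) :
    LCdist ν c κ f x y = (1 / 2) * ((muXYU ν c x y (x - y)) univ).toReal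
      * (f (2 * ‖x - y‖) - 2 * f ‖x - y‖) := by
  have hxy0 : x - y ≠ 0 := fun h => by simp [h] at hxy
  have hyx0 : y - x ≠ 0 := fun h => by
    rw [sub_eq_zero] at h
    exact hxy0 (by rw [h, sub_self])
  have hk1 : kap κ (x - y) = x - y := by
    rw [kap, min_eq_left ((one_le_div hxy).mpr hκ), one_smul]
  have hk2 : kap κ (y - x) = y - x := by
    have : ‖y - x‖ = ‖x - y‖ := norm_sub_rev y x
    rw [kap, this, min_eq_left ((one_le_div hxy).mpr hκ), one_smul]
  set r : ℝ := ‖x - y‖ with hr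
  set t : Ed d → ℝ := fun w => (deriv f r / r) * ⟪x - y, w⟫ with ht
  set G : Ed d → ℝ := fun w => if ‖w‖ ≤ 1 then t w else 0 with hG
  set μ₁ : Measure (Ed d) := muXYU ν c x y (y - x) with hμ₁
  set μ₂ : Measure (Ed d) := muXYU ν c x y (x - y) with hμ₂
  haveI : IsFiniteMeasure μ₁ := muXYU_finite hν hcUp x y hyx0
  haveI : IsFiniteMeasure μ₂ := muXYU_finite hν hcUp x y hxy0
  -- G : measurable and bounded
  have hGm : Measurable G := by
    refine Measurable.ite (measurableSet_le measurable_norm measurable_const) ?_ measurable_const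
    exact ((continuous_const.mul (continuous_const.inner continuous_id)).measurable)
  have hGb : ∀ w, |G w| ≤ |deriv f r / r| * r := by
    intro w
    rw [hG]
    by_cases hw : ‖w‖ ≤ 1
    · simp only [if_pos hw, ht, abs_mul]
      refine mul_le_mul_of_nonneg_left ?_ (abs_nonneg _)
      calc |⟪x - y, w⟫| ≤ ‖x - y‖ * ‖w‖ := abs_real_inner_le_norm _ _
        _ ≤ r * 1 := by exact mul_le_mul_of_nonneg_left hw (norm_nonneg _)
        _ = r := mul_one r
    · simp only [if_neg hw, abs_zero]
      positivity
  have hGint1 : Integrable G μ₁ := integrable_of_bdd hGm hGb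
  have hGint2 : Integrable G μ₂ := integrable_of_bdd hGm hGb
  have hGshift : ∀ (v : Ed d), Measurable (fun z : Ed d => G (z + v)) := fun v =>
    hGm.comp (measurable_add_const v)
  have hGsb : ∀ (v : Ed d) w, |G (w + v)| ≤ |deriv f r / r| * r := fun v w => hGb (w + v)
  -- change of variables
  have hmap1 : μ₁.map (fun z => z + (x - y)) = μ₂ := by
    have h := muXYU_map (ν := ν) hc x y (y - x)
    rw [neg_sub] at h
    exact h
  have hmap2 : μ₂.map (fun z => z + (y - x)) = μ₁ := by
    have h := muXYU_map (ν := ν) hc x y (x - y)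
    rw [neg_sub] at h
    exact h
  have hcov1 : ∫ z, G (z + (x - y)) ∂μ₁ = ∫ w, G w ∂μ₂ := by
    rw [← hmap1, integral_map (measurable_add_const (x - y)).aemeasurable
      (hGm.aestronglyMeasurable)]
  have hcov2 : ∫ z, G (z + (y - x)) ∂μ₂ = ∫ w, G w ∂μ₁ := by
    rw [← hmap2, integral_map (measurable_add_const (y - x)).aemeasurable
      (hGm.aestronglyMeasurable)]
  -- masses
  have hmass : (μ₁ univ).toReal = (μ₂ univ).toReal := by
    rw [← hmap1, Measure.map_apply (measurable_add_const (x - y)) MeasurableSet.univ,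
      preimage_univ]
  -- rewrite the three integrands
  have hI1 : (fun z : Ed d => f ‖x + z - (y + z + (x - y))‖ - f ‖x - y‖
      - (if ‖z‖ ≤ 1 then (deriv f ‖x - y‖ / ‖x - y‖) * ⟪x - y, z⟫ else 0)
      - (if ‖z + (x - y)‖ ≤ 1 then
          -((deriv f ‖x - y‖ / ‖x - y‖) * ⟪x - y, z + (x - y)⟫) else 0))
      = fun z : Ed d => (-(f r) - G z) + G (z + (x - y)) := by
    funext z
    have e0 : x + z - (y + z + (x - y)) = 0 := by abel
    rw [e0, norm_zero, hf0]
    simp only [hG, ht, ← hr]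
    by_cases h2 : ‖z + (x - y)‖ ≤ 1 <;> by_cases h1 : ‖z‖ ≤ 1 <;>
      simp [h1, h2] <;> ring
  have hI2 : (fun z : Ed d => f ‖x + z - (y + z + (y - x))‖ - f ‖x - y‖
      - (if ‖z‖ ≤ 1 then (deriv f ‖x - y‖ / ‖x - y‖) * ⟪x - y, z⟫ else 0)
      - (if ‖z + (y - x)‖ ≤ 1 then
          -((deriv f ‖x - y‖ / ‖x - y‖) * ⟪x - y, z + (y - x)⟫) else 0))
      = fun z : Ed d => (f (2 * r) - f r - G z) + G (z + (y - x)) := by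
    funext z
    have e0 : x + z - (y + z + (y - x)) = (2 : ℝ) • (x - y) := by module
    rw [e0, norm_smul]
    simp only [RCLike.norm_ofNat, Real.norm_ofNat, hG, ht, ← hr]
    by_cases h2 : ‖z + (y - x)‖ ≤ 1 <;> by_cases h1 : ‖z‖ ≤ 1 <;>
      simp [h1, h2] <;> ring
  have hI3 : (fun z : Ed d => f ‖x + z - (y + z)‖ - f ‖x - y‖
      - (if ‖z‖ ≤ 1 then (deriv f ‖x - y‖ / ‖x - y‖) * ⟪x - y, z⟫ else 0)
      - (if ‖z‖ ≤ 1 then -((deriv f ‖x - y‖ / ‖x - y‖) * ⟪x - y, z⟫) else 0))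
      = fun _ : Ed d => (0 : ℝ) := by
    funext z
    have e0 : x + z - (y + z) = x - y := by abel
    rw [e0]
    by_cases h1 : ‖z‖ ≤ 1 <;> simp [h1]
  -- compute the three integrals
  have hint1 : ∫ z, ((-(f r) - G z) + G (z + (x - y))) ∂μ₁
      = (-(f r)) * (μ₁ univ).toReal - ∫ z, G z ∂μ₁ + ∫ w, G w ∂μ₂ := by
    rw [integral_add (f := fun z => -(f r) - G z) (g := fun z => G (z + (x - y)))
      (show Integrable (fun z => -(f r) - G z) μ₁ from (integrable_const _).sub hGint1)
      (integrable_of_bdd (hGshift (x - y)) (hGsb (x - y))),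
      integral_sub (f := fun _ => -(f r)) (g := G) (integrable_const _) hGint1,
      integral_const, hcov1]
    simp [smul_eq_mul, mul_comm, measureReal_def]
  have hint2 : ∫ z, ((f (2 * r) - f r - G z) + G (z + (y - x))) ∂μ₂
      = (f (2 * r) - f r) * (μ₂ univ).toReal - ∫ z, G z ∂μ₂ + ∫ w, G w ∂μ₁ := by
    rw [integral_add (f := fun z => f (2 * r) - f r - G z) (g := fun z => G (z + (y - x)))
      (show Integrable (fun z => f (2 * r) - f r - G z) μ₂ from (integrable_const _).sub hGint2)
      (integrable_of_bdd (hGshift (y - x)) (hGsb (y - x))),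
      integral_sub (f := fun _ => f (2 * r) - f r) (g := G) (integrable_const _) hGint2,
      integral_const, hcov2]
    simp [smul_eq_mul, mul_comm, measureReal_def]
  rw [LCdist, hk1, hk2, hI1, hI2, hI3, hint1, hint2, integral_zero]
  rw [hmass]
  ring

end Helpers

section Calc
variable {f : ℝ → ℝ}

lemma deriv_anti (hf_smooth : ContDiffOn ℝ 2 f (Set.Ioi 0))
    (hf'' : ∀ r : ℝ, 0 < r → r ≤ 2 → deriv (deriv f) r ≤ 0) :
    ∀ a b : ℝ, 0 < a → a ≤ b → b ≤ 2 → deriv f b ≤ deriv f a := by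
  intro a b ha hab hb2
  have hsub : Icc a b ⊆ Ioi 0 := fun t ht => lt_of_lt_of_le ha ht.1
  have hcd1 : ContDiffOn ℝ 1 (deriv f) (Ioi 0) :=
    hf_smooth.deriv_of_isOpen isOpen_Ioi (by norm_num)
  have h := antitoneOn_of_deriv_nonpos (convex_Icc a b)
    ((hcd1.continuousOn).mono hsub)
    (fun t ht => by
      rw [interior_Icc] at ht
      exact ((hcd1.differentiableOn one_ne_zero).differentiableAt
        (isOpen_Ioi.mem_nhds (lt_trans ha ht.1))).differentiableWithinAt)
    (fun t ht => by
      rw [interior_Icc] at ht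
      exact hf'' t (lt_trans ha ht.1) (le_of_lt (lt_of_lt_of_le ht.2 hb2)))
  exact h ⟨le_rfl, hab⟩ ⟨hab, le_rfl⟩ hab

lemma tangent_le (hf_cont : ContinuousOn f (Set.Ici 0))
    (hf_smooth : ContDiffOn ℝ 2 f (Set.Ioi 0))
    (hf'' : ∀ r : ℝ, 0 < r → r ≤ 2 → deriv (deriv f) r ≤ 0) :
    ∀ ρ : ℝ, 0 < ρ → ρ ≤ 2 → ∀ s : ℝ, 0 ≤ s → s ≤ 2 →
      f s ≤ f ρ + deriv f ρ * (s - ρ) := by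
  intro ρ hρ hρ2 s hs0 hs2
  set g : ℝ → ℝ := fun t => f t - deriv f ρ * t with hg
  have hfd : ∀ t : ℝ, 0 < t → DifferentiableAt ℝ f t := fun t ht =>
    (hf_smooth.differentiableOn two_ne_zero).differentiableAt (isOpen_Ioi.mem_nhds ht)
  have hgd : ∀ t : ℝ, 0 < t → DifferentiableAt ℝ g t := fun t ht =>
    (hfd t ht).sub ((differentiableAt_id.const_mul _))
  have hgderiv : ∀ t : ℝ, 0 < t → deriv g t = deriv f t - deriv f ρ := by
    intro t ht
    have h2 : DifferentiableAt ℝ (fun t : ℝ => deriv f ρ * t) t :=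
      differentiableAt_fun_id.const_mul _
    rw [hg]
    rw [deriv_fun_sub (hfd t ht) h2, deriv_const_mul _ differentiableAt_fun_id]
    simp
  have hgc : ContinuousOn g (Ici 0) :=
    hf_cont.sub ((continuous_const.mul continuous_id).continuousOn)
  have hmono : MonotoneOn g (Icc 0 ρ) := by
    refine monotoneOn_of_deriv_nonneg (convex_Icc 0 ρ) (hgc.mono Icc_subset_Ici_self)
      (fun t ht => by
        rw [interior_Icc] at ht
        exact (hgd t ht.1).differentiableWithinAt) ?_
    intro t ht
    rw [interior_Icc] at ht
    rw [hgderiv t ht.1]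
    have := deriv_anti hf_smooth hf'' t ρ ht.1 ht.2.le hρ2
    linarith
  have hanti : AntitoneOn g (Icc ρ 2) := by
    refine antitoneOn_of_deriv_nonpos (convex_Icc ρ 2)
      (hgc.mono (fun t ht => le_trans hρ.le ht.1))
      (fun t ht => by
        rw [interior_Icc] at ht
        exact (hgd t (lt_trans hρ ht.1)).differentiableWithinAt) ?_
    intro t ht
    rw [interior_Icc] at ht
    rw [hgderiv t (lt_trans hρ ht.1)]
    have := deriv_anti hf_smooth hf'' ρ t hρ ht.1.le (le_of_lt ht.2)
    linarith
  have key : g s ≤ g ρ := by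
    rcases le_total s ρ with h | h
    · exact hmono ⟨hs0, h⟩ ⟨hρ.le, le_rfl⟩ h
    · exact hanti ⟨le_rfl, hρ2⟩ ⟨h, hs2⟩ h
  simp only [hg] at key
  nlinarith

lemma deriv_lip (hf_smooth : ContDiffOn ℝ 2 f (Set.Ioi 0)) {a : ℝ} (ha : 0 < a) :
    ∃ K : ℝ, 0 ≤ K ∧ ∀ s ∈ Icc a 2, ∀ t ∈ Icc a 2, |deriv f s - deriv f t| ≤ K * |s - t| := by
  have hcd1 : ContDiffOn ℝ 1 (deriv f) (Ioi 0) :=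
    hf_smooth.deriv_of_isOpen isOpen_Ioi (by norm_num)
  have hsub : Icc a 2 ⊆ Ioi 0 := fun t ht => lt_of_lt_of_le ha ht.1
  have hc2 : ContinuousOn (deriv (deriv f)) (Icc a 2) :=
    (hcd1.continuousOn_deriv_of_isOpen isOpen_Ioi le_rfl).mono hsub
  obtain ⟨C, hC⟩ := (isCompact_Icc).exists_bound_of_continuousOn hc2
  refine ⟨max C 0, le_max_right _ _, fun s hs t ht => ?_⟩
  have := Convex.norm_image_sub_le_of_norm_deriv_le
    (f := deriv f) (s := Icc a 2) (C := max C 0)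
    (fun w hw => (hcd1.differentiableOn one_ne_zero).differentiableAt
      (isOpen_Ioi.mem_nhds (hsub hw)))
    (fun w hw => le_trans (hC w hw) (le_max_left _ _)) (convex_Icc a 2) ht hs
  simpa [Real.norm_eq_abs] using this

end Calc

section Helpers2
variable {d : ℕ}

lemma sq_integrable {ν : Measure (Ed d)} (hν : IsLevyMeasure ν) :
    IntegrableOn (fun z : Ed d => ‖z‖ ^ 2) {z : Ed d | ‖z‖ ≤ 1} ν := by
  have hS : MeasurableSet {z : Ed d | ‖z‖ ≤ 1} :=
    measurableSet_le measurable_norm measurable_const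
  refine ⟨(continuous_norm.pow 2).aestronglyMeasurable, ?_⟩
  rw [hasFiniteIntegral_iff_norm]
  calc ∫⁻ z in {z : Ed d | ‖z‖ ≤ 1}, ENNReal.ofReal ‖‖z‖ ^ 2‖ ∂ν
      = ∫⁻ z in {z : Ed d | ‖z‖ ≤ 1}, ENNReal.ofReal (min 1 (‖z‖ ^ 2)) ∂ν := by
        refine setLIntegral_congr_fun hS (fun z hz => ?_)
        have h1 : ‖z‖ ^ 2 ≤ 1 := by nlinarith [hz.out, norm_nonneg z]
        rw [Real.norm_eq_abs, abs_of_nonneg (by positivity), min_eq_right h1]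
    _ ≤ ∫⁻ z, ENNReal.ofReal (min 1 (‖z‖ ^ 2)) ∂ν := setLIntegral_le_lintegral _ _
    _ < ⊤ := hν.2

lemma ctilde_nonneg {c : Ed d → Ed d → ℝ} (x y z : Ed d) : 0 ≤ ctilde c x y z :=
  sub_nonneg.mpr (min_le_left _ _)

lemma ctilde_le {c : Ed d → Ed d → ℝ} {cUp : ℝ} (h : ∀ x z, 0 ≤ c x z ∧ c x z ≤ cUp)
    (x y z : Ed d) : ctilde c x y z ≤ cUp := by
  have := (h x z).2
  have h2 : 0 ≤ min (c x z) (c y z) := le_min (h x z).1 (h y z).1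
  rw [ctilde]; linarith

lemma ctilde_add {c : Ed d → Ed d → ℝ} (x y z : Ed d) :
    ctilde c x y z + ctilde c y x z = |c x z - c y z| := by
  rcases le_total (c x z) (c y z) with h | h
  · rw [ctilde, ctilde, min_eq_left h, min_comm, min_eq_left h, abs_of_nonpos (by linarith)]
    ring
  · rw [ctilde, ctilde, min_eq_right h, min_comm, min_eq_right h, abs_of_nonneg (by linarith)]
    ring

lemma measurable_ctilde {c : Ed d → Ed d → ℝ}
    (hc : Continuous (fun p : Ed d × Ed d => c p.1 p.2)) (x y : Ed d) :
    Measurable (fun z => ctilde c x y z) := by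
  have h1 : ∀ v : Ed d, Continuous (fun z : Ed d => c v z) := fun v =>
    hc.comp (Continuous.prodMk_right v)
  exact ((h1 x).sub ((h1 x).min (h1 y))).measurable

lemma LR_le {ν : Measure (Ed d)} (hν : IsLevyMeasure ν) {c : Ed d → Ed d → ℝ}
    (hc : Continuous (fun p : Ed d × Ed d => c p.1 p.2))
    {cUp : ℝ} (hc_bound : ∀ x z, 0 ≤ c x z ∧ c x z ≤ cUp)
    {f : ℝ → ℝ} {Mf : ℝ}
    (hf_bdd : ∀ r : ℝ, 0 ≤ r → |f r| ≤ Mf)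
    (hf_cont : ContinuousOn f (Set.Ici 0))
    (hf_smooth : ContDiffOn ℝ 2 f (Set.Ioi 0))
    (hf' : ∀ r : ℝ, 0 < r → r ≤ 2 → 0 ≤ deriv f r)
    (hf'' : ∀ r : ℝ, 0 < r → r ≤ 2 → deriv (deriv f) r ≤ 0)
    {Mc : ℝ} (hMc : ∀ (x z : Ed d), 1 < ‖z‖ → c x z ≤ Mc)
    (x y : Ed d) (hxy : 0 < ‖x - y‖) (hr1 : ‖x - y‖ ≤ 1) :
    LRdist ν c f x y
      ≤ (∫ z in {z : Ed d | ‖z‖ ≤ 1}, |c x z - c y z| * ‖z‖ ^ 2 ∂ν)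
          * (deriv f ‖x - y‖ / ‖x - y‖)
        + 2 * (ν {z : Ed d | 1 < ‖z‖}).toReal * Mc * Mf := by
  set a : Ed d := x - y with ha
  set r : ℝ := ‖x - y‖ with hrdef
  have hr : r = ‖a‖ := rfl
  set fd : ℝ := deriv f r with hfd
  have hfd0 : 0 ≤ fd := hf' r hxy (by linarith)
  have hMf0 : 0 ≤ Mf := le_trans (abs_nonneg _) (hf_bdd 0 le_rfl)
  have hnorm_sq : ∀ w : Ed d, ‖a + w‖ ^ 2 = r ^ 2 + 2 * ⟪a, w⟫ + ‖w‖ ^ 2 := by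
    intro w
    rw [hr]
    exact norm_add_sq_real a w
  have hN1 : ∀ w : Ed d, r + ⟪a, w⟫ / r ≤ ‖a + w‖ := by
    intro w
    have h1 : ⟪a, a + w⟫ ≤ ‖a‖ * ‖a + w‖ := real_inner_le_norm a (a + w)
    rw [inner_add_right, real_inner_self_eq_norm_sq] at h1
    have h2 : ⟪a, w⟫ / r ≤ ‖a + w‖ - r := by
      rw [div_le_iff₀ hxy, hr]
      rw [hr] at hxy
      nlinarith [h1]
    linarith
  have hN2 : ∀ w : Ed d, ‖a + w‖ - r - ⟪a, w⟫ / r ≤ ‖w‖ ^ 2 / (2 * r) := by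
    intro w
    have h1 := hnorm_sq w
    have h2 := sq_nonneg (‖a + w‖ - r)
    have h4 : ⟪a, w⟫ / r * r = ⟪a, w⟫ := div_mul_cancel₀ _ (ne_of_gt hxy)
    rw [le_div_iff₀ (by positivity : (0:ℝ) < 2 * r)]
    nlinarith [h1, h2, h4]
  set T : Ed d → ℝ := fun w => f ‖a + w‖ - f r - (if ‖w‖ ≤ 1 then fd / r * ⟪a, w⟫ else 0)
    with hT
  have hfc : Continuous fun w : Ed d => f ‖a + w‖ :=
    hf_cont.comp_continuous ((continuous_const.add continuous_id).norm)
      (fun w => norm_nonneg _)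
  have hTm : Measurable T := by
    refine (hfc.measurable.sub measurable_const).sub
      (Measurable.ite (measurableSet_le measurable_norm measurable_const) ?_ measurable_const)
    exact (continuous_const.mul (continuous_const.inner continuous_id)).measurable
  have hr2 : r ≤ 2 := by linarith
  have hP1 : ∀ w : Ed d, ‖w‖ ≤ 1 → T w ≤ fd / (2 * r) * ‖w‖ ^ 2 := by
    intro w hw
    have hs2 : ‖a + w‖ ≤ 2 := by
      have := norm_add_le a w
      rw [← hr] at this
      linarith
    have htan := tangent_le hf_cont hf_smooth hf'' r hxy hr2 ‖a + w‖ (norm_nonneg _) hs2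
    have h2 := hN2 w
    have h1 := hN1 w
    simp only [hT, if_pos hw]
    calc f ‖a + w‖ - f r - fd / r * ⟪a, w⟫
        ≤ fd * (‖a + w‖ - r) - fd / r * ⟪a, w⟫ := by rw [hfd]; linarith
      _ = fd * (‖a + w‖ - r - ⟪a, w⟫ / r) := by ring
      _ ≤ fd * (‖w‖ ^ 2 / (2 * r)) := mul_le_mul_of_nonneg_left h2 hfd0
      _ = fd / (2 * r) * ‖w‖ ^ 2 := by ring
  have hP2 : ∀ w : Ed d, ¬ ‖w‖ ≤ 1 → T w ≤ 2 * Mf := by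
    intro w hw
    have h1 := abs_le.mp (hf_bdd ‖a + w‖ (norm_nonneg _))
    have h2 := abs_le.mp (hf_bdd r (by positivity))
    simp only [hT, if_neg hw]
    linarith
  obtain ⟨K, hK0, hKlip⟩ := deriv_lip hf_smooth (half_pos hxy)
  set C : ℝ := max (K + fd / (2 * r)) (2 * Mf + fd) with hC
  have hC0 : 0 ≤ C := le_trans (by positivity) (le_max_left _ _)
  have habsI : ∀ w : Ed d, |if ‖w‖ ≤ 1 then fd / r * ⟪a, w⟫ else 0| ≤ fd := by
    intro w
    by_cases hw : ‖w‖ ≤ 1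
    · rw [if_pos hw, abs_mul, abs_of_nonneg (div_nonneg hfd0 hxy.le)]
      have h1 : |⟪a, w⟫| ≤ ‖a‖ * ‖w‖ := abs_real_inner_le_norm a w
      have h2 : |⟪a, w⟫| ≤ r := by
        rw [hr]
        calc |⟪a, w⟫| ≤ ‖a‖ * ‖w‖ := h1
          _ ≤ ‖a‖ * 1 := mul_le_mul_of_nonneg_left hw (norm_nonneg a)
          _ = ‖a‖ := mul_one _
      calc fd / r * |⟪a, w⟫| ≤ fd / r * r :=
            mul_le_mul_of_nonneg_left h2 (div_nonneg hfd0 hxy.le)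
        _ = fd := div_mul_cancel₀ _ (ne_of_gt hxy)
    · rw [if_neg hw, abs_zero]; exact hfd0
  have hP3 : ∀ w : Ed d, |T w| ≤ if ‖w‖ ≤ r / 2 then C * ‖w‖ ^ 2 else C := by
    intro w
    by_cases hw : ‖w‖ ≤ r / 2
    · rw [if_pos hw]
      have hw1 : ‖w‖ ≤ 1 := by linarith
      have habs : |‖a + w‖ - r| ≤ ‖w‖ := by
        rw [hr]
        have := abs_norm_sub_norm_le (a + w) a
        simpa using this
      have habs' := abs_le.mp habs
      have hs_lb : r / 2 ≤ ‖a + w‖ := by linarith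
      have hs_ub : ‖a + w‖ ≤ 2 := by linarith
      have hsIcc : ‖a + w‖ ∈ Icc (r / 2) 2 := ⟨hs_lb, hs_ub⟩
      have hrIcc : r ∈ Icc (r / 2) 2 := ⟨by linarith, hr2⟩
      have hlip := hKlip ‖a + w‖ hsIcc r hrIcc
      have htan1 := tangent_le hf_cont hf_smooth hf'' r hxy hr2 ‖a + w‖ (norm_nonneg _) hs_ub
      have htan2 := tangent_le hf_cont hf_smooth hf'' ‖a + w‖ (by linarith) hs_ub r
        (by positivity) hr2
      have hn1 := hN1 w
      have hn2 := hN2 w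
      have hlip' := abs_le.mp hlip
      have habs2 : |‖a + w‖ - r| ^ 2 ≤ ‖w‖ ^ 2 := by
        have h0 : (0:ℝ) ≤ |‖a + w‖ - r| := abs_nonneg _
        nlinarith [habs]
      -- T w = [f s - f r - fd (s-r)] + fd * (s - r - i/r)
      have hid : T w = (f ‖a + w‖ - f r - fd * (‖a + w‖ - r))
          + fd * (‖a + w‖ - r - ⟪a, w⟫ / r) := by
        simp only [hT, if_pos hw1]
        ring
      have hup : f ‖a + w‖ - f r - fd * (‖a + w‖ - r) ≤ 0 := by
        rw [hfd]; linarith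
      have hlo : -(K * ‖w‖ ^ 2) ≤ f ‖a + w‖ - f r - fd * (‖a + w‖ - r) := by
        have h5 : f r - f ‖a + w‖ ≤ deriv f ‖a + w‖ * (r - ‖a + w‖) := by linarith
        have h6 : (deriv f ‖a + w‖ - fd) * (‖a + w‖ - r) ≥ -(K * ‖w‖ ^ 2) := by
          have h7 : |(deriv f ‖a + w‖ - fd) * (‖a + w‖ - r)| ≤ K * ‖w‖ ^ 2 := by
            rw [abs_mul]
            calc |deriv f ‖a + w‖ - fd| * |‖a + w‖ - r|
                ≤ (K * |‖a + w‖ - r|) * |‖a + w‖ - r| := by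
                  refine mul_le_mul_of_nonneg_right ?_ (abs_nonneg _)
                  simpa [hfd] using hlip
              _ = K * |‖a + w‖ - r| ^ 2 := by ring
              _ ≤ K * ‖w‖ ^ 2 := mul_le_mul_of_nonneg_left habs2 hK0
          linarith [(abs_le.mp h7).1]
        have h8 : (deriv f ‖a + w‖ - fd) * (‖a + w‖ - r)
            = deriv f ‖a + w‖ * (‖a + w‖ - r) - fd * (‖a + w‖ - r) := by ring
        have h9 : deriv f ‖a + w‖ * (r - ‖a + w‖)
            = -(deriv f ‖a + w‖ * (‖a + w‖ - r)) := by ring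
        rw [h8] at h6
        rw [h9] at h5
        linarith
      have hmid : 0 ≤ ‖a + w‖ - r - ⟪a, w⟫ / r := by linarith
      have hmid2 : fd * (‖a + w‖ - r - ⟪a, w⟫ / r) ≤ fd / (2 * r) * ‖w‖ ^ 2 := by
        calc fd * (‖a + w‖ - r - ⟪a, w⟫ / r) ≤ fd * (‖w‖ ^ 2 / (2 * r)) :=
              mul_le_mul_of_nonneg_left hn2 hfd0
          _ = fd / (2 * r) * ‖w‖ ^ 2 := by ring
      have hCK : K + fd / (2 * r) ≤ C := le_max_left _ _
      have hq1 : K * ‖w‖ ^ 2 + fd / (2 * r) * ‖w‖ ^ 2 ≤ C * ‖w‖ ^ 2 := by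
        have := mul_le_mul_of_nonneg_right hCK (sq_nonneg ‖w‖)
        nlinarith [this]
      have hq2 : (0:ℝ) ≤ fd / (2 * r) * ‖w‖ ^ 2 := by positivity
      have hq3 : (0:ℝ) ≤ K * ‖w‖ ^ 2 := by positivity
      have hY0 : 0 ≤ fd * (‖a + w‖ - r - ⟪a, w⟫ / r) := mul_nonneg hfd0 hmid
      rw [hid, abs_le]
      constructor
      · linarith
      · linarith
    · rw [if_neg hw]
      have h1 := abs_le.mp (hf_bdd ‖a + w‖ (norm_nonneg _))
      have h2 := abs_le.mp (hf_bdd r (by positivity))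
      have h3 := abs_le.mp (habsI w)
      have hCK : 2 * Mf + fd ≤ C := le_max_right _ _
      rw [hT, abs_le]
      constructor
      · simp only []
        linarith
      · simp only []
        linarith
  -- sets
  have hcUp0 : 0 ≤ cUp := le_trans (hc_bound x x).1 (hc_bound x x).2
  set S : Set (Ed d) := {z : Ed d | ‖z‖ ≤ 1} with hSdef
  have hS : MeasurableSet S := measurableSet_le measurable_norm measurable_const
  set S2 : Set (Ed d) := {z : Ed d | ‖z‖ ≤ r / 2} with hS2def
  have hS2 : MeasurableSet S2 := measurableSet_le measurable_norm measurable_const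
  have hSc_eq : Sᶜ = {z : Ed d | 1 < ‖z‖} := by
    ext z; simp [hSdef, not_le]
  have hSc_lt : ν Sᶜ < ⊤ := by
    rw [hSc_eq]
    exact lt_of_le_of_lt (measure_mono (fun z hz => le_of_lt hz.out)) (levy_outer hν one_pos)
  have hS2c_lt : ν S2ᶜ < ⊤ := by
    refine lt_of_le_of_lt (measure_mono (fun z hz => ?_)) (levy_outer hν (half_pos hxy))
    simp only [mem_compl_iff, hS2def, mem_setOf_eq, not_le] at hz
    exact hz.le
  set ct1 : Ed d → ℝ := fun z => ctilde c x y z with hct1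
  set ct2 : Ed d → ℝ := fun z => ctilde c y x z with hct2
  have hct1m : Measurable ct1 := measurable_ctilde hc x y
  have hct2m : Measurable ct2 := measurable_ctilde hc y x
  have hct1b : ∀ z, 0 ≤ ct1 z ∧ ct1 z ≤ cUp := fun z =>
    ⟨ctilde_nonneg x y z, ctilde_le hc_bound x y z⟩
  have hct2b : ∀ z, 0 ≤ ct2 z ∧ ct2 z ≤ cUp := fun z =>
    ⟨ctilde_nonneg y x z, ctilde_le hc_bound y x z⟩
  -- integrand rewrites
  have hfun1 : (fun z : Ed d => (f ‖x + z - y‖ - f r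
      - (if ‖z‖ ≤ 1 then fd / r * ⟪a, z⟫ else 0)) * ctilde c x y z)
      = fun z => T z * ct1 z := by
    funext z
    have e : x + z - y = a + z := by rw [ha]; abel
    rw [hT, hct1, e]
  have hfun2 : (fun z : Ed d => (f ‖x - (y + z)‖ - f r
      - (if ‖z‖ ≤ 1 then -(fd / r * ⟪a, z⟫) else 0)) * ctilde c y x z)
      = fun z => T (-z) * ct2 z := by
    funext z
    have e : a + -z = x - (y + z) := by rw [ha]; abel
    have hTz : T (-z) = f ‖x - (y + z)‖ - f r
        - (if ‖z‖ ≤ 1 then -(fd / r * ⟪a, z⟫) else 0) := by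
      rw [hT]
      simp only [norm_neg, inner_neg_right, mul_neg, e]
    rw [hTz, hct2]
  -- integrability of the integrands
  have hsqOn : IntegrableOn (fun z : Ed d => ‖z‖ ^ 2) S2 ν :=
    (sq_integrable hν).mono_set (fun z hz => by
      simp only [hS2def, mem_setOf_eq] at hz ⊢
      exact le_trans hz (by linarith))
  have hDint : Integrable (fun z => Set.indicator S2 (fun z => (C * cUp) * ‖z‖ ^ 2) z
      + Set.indicator S2ᶜ (fun _ => C * cUp) z) ν := by
    refine Integrable.add ?_ ?_
    · exact IntegrableOn.integrable_indicator (hsqOn.const_mul (C * cUp)) hS2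
    · exact IntegrableOn.integrable_indicator (integrableOn_const hS2c_lt.ne) hS2.compl
  have habs_prod : ∀ (Tv ctv : ℝ) (hct : 0 ≤ ctv ∧ ctv ≤ cUp) (B : ℝ) (hB : |Tv| ≤ B),
      |Tv * ctv| ≤ B * cUp := by
    intro Tv ctv hct B hB
    rw [abs_mul, abs_of_nonneg hct.1]
    exact mul_le_mul hB hct.2 hct.1 (le_trans (abs_nonneg _) hB)
  have hDbd : ∀ (w z : Ed d), ‖w‖ = ‖z‖ → ∀ ctv : ℝ, 0 ≤ ctv → ctv ≤ cUp →
      |T w * ctv| ≤ Set.indicator S2 (fun z => (C * cUp) * ‖z‖ ^ 2) z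
        + Set.indicator S2ᶜ (fun _ => C * cUp) z := by
    intro w z hwz ctv h0 hup
    have hTb := hP3 w
    rw [hwz] at hTb
    by_cases hz : z ∈ S2
    · rw [Set.indicator_of_mem hz, Set.indicator_of_notMem (by simp [hz]), add_zero]
      rw [if_pos hz.out] at hTb
      calc |T w * ctv| ≤ (C * ‖z‖ ^ 2) * cUp := habs_prod _ _ ⟨h0, hup⟩ _ hTb
        _ = (C * cUp) * ‖z‖ ^ 2 := by ring
    · rw [Set.indicator_of_notMem hz, Set.indicator_of_mem (by simp [hz]), zero_add]
      rw [if_neg (show ¬ ‖z‖ ≤ r / 2 from fun hh => hz hh)] at hTb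
      exact habs_prod _ _ ⟨h0, hup⟩ _ hTb
  have hg1int : Integrable (fun z => T z * ct1 z) ν := by
    refine hDint.mono' ((hTm.mul hct1m).aestronglyMeasurable)
      (Filter.Eventually.of_forall fun z => ?_)
    rw [Real.norm_eq_abs]
    exact hDbd z z rfl (ct1 z) (hct1b z).1 (hct1b z).2
  have hg2int : Integrable (fun z => T (-z) * ct2 z) ν := by
    refine hDint.mono' (((hTm.comp measurable_neg).mul hct2m).aestronglyMeasurable)
      (Filter.Eventually.of_forall fun z => ?_)
    rw [Real.norm_eq_abs]
    exact hDbd (-z) z (norm_neg z) (ct2 z) (hct2b z).1 (hct2b z).2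
  -- majorants
  have h2r : (0:ℝ) ≤ fd / (2 * r) := div_nonneg hfd0 (by linarith)
  set p1 : Ed d → ℝ := fun z => fd / (2 * r) * ‖z‖ ^ 2 * ct1 z with hp1
  set p2 : Ed d → ℝ := fun z => fd / (2 * r) * ‖z‖ ^ 2 * ct2 z with hp2
  set q1 : Ed d → ℝ := fun z => 2 * Mf * ct1 z with hq1
  set q2 : Ed d → ℝ := fun z => 2 * Mf * ct2 z with hq2
  have hpInt : ∀ (ct : Ed d → ℝ), Measurable ct → (∀ z, 0 ≤ ct z ∧ ct z ≤ cUp) →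
      IntegrableOn (fun z => fd / (2 * r) * ‖z‖ ^ 2 * ct z) S ν := by
    intro ct hm hb
    refine ((sq_integrable hν).const_mul (fd / (2 * r) * cUp)).mono'
      (((measurable_const.mul ((continuous_norm.pow 2).measurable)).mul hm).aestronglyMeasurable)
      (Filter.Eventually.of_forall fun z => ?_)
    have h0 : 0 ≤ fd / (2 * r) * ‖z‖ ^ 2 := mul_nonneg h2r (sq_nonneg _)
    rw [Real.norm_eq_abs, abs_of_nonneg (mul_nonneg h0 (hb z).1)]
    calc fd / (2 * r) * ‖z‖ ^ 2 * ct z ≤ fd / (2 * r) * ‖z‖ ^ 2 * cUp :=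
          mul_le_mul_of_nonneg_left (hb z).2 h0
      _ = fd / (2 * r) * cUp * ‖z‖ ^ 2 := by ring
  have hqInt : ∀ (ct : Ed d → ℝ), Measurable ct → (∀ z, 0 ≤ ct z ∧ ct z ≤ cUp) →
      IntegrableOn (fun z => 2 * Mf * ct z) Sᶜ ν := by
    intro ct hm hb
    refine (integrableOn_const hSc_lt.ne :
        IntegrableOn (fun _ => 2 * Mf * cUp) Sᶜ ν).mono'
      ((measurable_const.mul hm).aestronglyMeasurable)
      (Filter.Eventually.of_forall fun z => ?_)
    rw [Real.norm_eq_abs, abs_of_nonneg (mul_nonneg (by linarith) (hb z).1)]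
    exact mul_le_mul_of_nonneg_left (hb z).2 (by linarith)
  have hp1Int := hpInt ct1 hct1m hct1b
  have hp2Int := hpInt ct2 hct2m hct2b
  have hq1Int := hqInt ct1 hct1m hct1b
  have hq2Int := hqInt ct2 hct2m hct2b
  have hMaj1 : Integrable (fun z => Set.indicator S p1 z + Set.indicator Sᶜ q1 z) ν :=
    (hp1Int.integrable_indicator hS).add (hq1Int.integrable_indicator hS.compl)
  have hMaj2 : Integrable (fun z => Set.indicator S p2 z + Set.indicator Sᶜ q2 z) ν :=
    (hp2Int.integrable_indicator hS).add (hq2Int.integrable_indicator hS.compl)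
  have hpt1 : ∀ z, T z * ct1 z ≤ Set.indicator S p1 z + Set.indicator Sᶜ q1 z := by
    intro z
    by_cases hz : z ∈ S
    · rw [Set.indicator_of_mem hz, Set.indicator_of_notMem (by simp [hz]), add_zero, hp1]
      exact mul_le_mul_of_nonneg_right (hP1 z hz.out) (hct1b z).1
    · rw [Set.indicator_of_notMem hz, Set.indicator_of_mem (by simp [hz]), zero_add, hq1]
      exact mul_le_mul_of_nonneg_right (hP2 z (fun hh => hz hh)) (hct1b z).1
  have hpt2 : ∀ z, T (-z) * ct2 z ≤ Set.indicator S p2 z + Set.indicator Sᶜ q2 z := by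
    intro z
    by_cases hz : z ∈ S
    · rw [Set.indicator_of_mem hz, Set.indicator_of_notMem (by simp [hz]), add_zero, hp2]
      have h5 := hP1 (-z) (by rw [norm_neg]; exact hz.out)
      rw [norm_neg] at h5
      exact mul_le_mul_of_nonneg_right h5 (hct2b z).1
    · rw [Set.indicator_of_notMem hz, Set.indicator_of_mem (by simp [hz]), zero_add, hq2]
      have h5 := hP2 (-z) (by rw [norm_neg]; exact (fun hh => hz hh))
      exact mul_le_mul_of_nonneg_right h5 (hct2b z).1
  have hInt1 : ∫ z, T z * ct1 z ∂ν ≤ ∫ z in S, p1 z ∂ν + ∫ z in Sᶜ, q1 z ∂ν := by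
    calc ∫ z, T z * ct1 z ∂ν
        ≤ ∫ z, (Set.indicator S p1 z + Set.indicator Sᶜ q1 z) ∂ν :=
          integral_mono hg1int hMaj1 hpt1
      _ = ∫ z, Set.indicator S p1 z ∂ν + ∫ z, Set.indicator Sᶜ q1 z ∂ν :=
          integral_add (hp1Int.integrable_indicator hS) (hq1Int.integrable_indicator hS.compl)
      _ = ∫ z in S, p1 z ∂ν + ∫ z in Sᶜ, q1 z ∂ν := by
          rw [integral_indicator hS, integral_indicator hS.compl]
  have hInt2 : ∫ z, T (-z) * ct2 z ∂ν ≤ ∫ z in S, p2 z ∂ν + ∫ z in Sᶜ, q2 z ∂ν := by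
    calc ∫ z, T (-z) * ct2 z ∂ν
        ≤ ∫ z, (Set.indicator S p2 z + Set.indicator Sᶜ q2 z) ∂ν :=
          integral_mono hg2int hMaj2 hpt2
      _ = ∫ z, Set.indicator S p2 z ∂ν + ∫ z, Set.indicator Sᶜ q2 z ∂ν :=
          integral_add (hp2Int.integrable_indicator hS) (hq2Int.integrable_indicator hS.compl)
      _ = ∫ z in S, p2 z ∂ν + ∫ z in Sᶜ, q2 z ∂ν := by
          rw [integral_indicator hS, integral_indicator hS.compl]
  -- combine A terms
  set I : ℝ := ∫ z in S, |c x z - c y z| * ‖z‖ ^ 2 ∂ν with hI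
  have hI0 : 0 ≤ I := setIntegral_nonneg hS (fun z _ => by positivity)
  have hA : ∫ z in S, p1 z ∂ν + ∫ z in S, p2 z ∂ν = fd / (2 * r) * I := by
    rw [← integral_add hp1Int hp2Int, hI, ← integral_const_mul]
    refine setIntegral_congr_fun hS (fun z _ => ?_)
    rw [show fd / (2 * r) * ‖z‖ ^ 2 * ct1 z + fd / (2 * r) * ‖z‖ ^ 2 * ct2 z
        = fd / (2 * r) * ‖z‖ ^ 2 * (ct1 z + ct2 z) from by ring, hct1, hct2, ctilde_add]
    ring
  have hA_le : fd / (2 * r) * I ≤ I * (fd / r) := by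
    have hdd : fd / (2 * r) ≤ fd / r := by
      rw [div_le_div_iff₀ (by linarith) hxy]
      nlinarith [hfd0]
    calc fd / (2 * r) * I ≤ fd / r * I := mul_le_mul_of_nonneg_right hdd hI0
      _ = I * (fd / r) := by ring
  -- combine B terms
  have hB : ∫ z in Sᶜ, q1 z ∂ν + ∫ z in Sᶜ, q2 z ∂ν
      = 2 * Mf * ∫ z in Sᶜ, |c x z - c y z| ∂ν := by
    rw [← integral_add hq1Int hq2Int, ← integral_const_mul]
    refine setIntegral_congr_fun hS.compl (fun z _ => ?_)
    rw [show 2 * Mf * ct1 z + 2 * Mf * ct2 z = 2 * Mf * (ct1 z + ct2 z) from by ring,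
      hct1, hct2, ctilde_add]
  have hDiffInt : IntegrableOn (fun z => |c x z - c y z|) Sᶜ ν := by
    refine (integrableOn_const hSc_lt.ne :
        IntegrableOn (fun _ => 2 * cUp) Sᶜ ν).mono'
      ((((hc.comp (Continuous.prodMk_right x)).sub
        (hc.comp (Continuous.prodMk_right y))).abs.measurable).aestronglyMeasurable)
      (Filter.Eventually.of_forall fun z => ?_)
    rw [Real.norm_eq_abs, abs_abs]
    have g1 := hc_bound x z
    have g2 := hc_bound y z
    rw [abs_le]
    constructor <;> [linarith [g1.1, g2.2]; linarith [g1.2, g2.1]]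
  have hB_le : ∫ z in Sᶜ, |c x z - c y z| ∂ν ≤ Mc * (ν Sᶜ).toReal := by
    calc ∫ z in Sᶜ, |c x z - c y z| ∂ν ≤ ∫ _ in Sᶜ, Mc ∂ν := by
          refine setIntegral_mono_on hDiffInt (integrableOn_const hSc_lt.ne)
            hS.compl (fun z hz => ?_)
          rw [hSc_eq] at hz
          have h6 := hMc x z hz.out
          have h7 := hMc y z hz.out
          have g1 := hc_bound x z
          have g2 := hc_bound y z
          rw [abs_le]
          constructor <;> [linarith [g2.2]; linarith [g1.2]]
      _ = Mc * (ν Sᶜ).toReal := by rw [setIntegral_const, smul_eq_mul, mul_comm, measureReal_def]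
  -- final assembly
  have hfinal2 : ∫ z in Sᶜ, q1 z ∂ν + ∫ z in Sᶜ, q2 z ∂ν
      ≤ 2 * (ν {z : Ed d | 1 < ‖z‖}).toReal * Mc * Mf := by
    rw [hB, ← hSc_eq]
    calc 2 * Mf * ∫ z in Sᶜ, |c x z - c y z| ∂ν ≤ 2 * Mf * (Mc * (ν Sᶜ).toReal) :=
          mul_le_mul_of_nonneg_left hB_le (by linarith)
      _ = 2 * (ν Sᶜ).toReal * Mc * Mf := by ring
  rw [LRdist]
  rw [← hrdef, ← ha, ← hfd]
  rw [hfun1, hfun2]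
  calc (∫ z, T z * ct1 z ∂ν) + ∫ z, T (-z) * ct2 z ∂ν
      ≤ (∫ z in S, p1 z ∂ν + ∫ z in Sᶜ, q1 z ∂ν)
        + (∫ z in S, p2 z ∂ν + ∫ z in Sᶜ, q2 z ∂ν) := add_le_add hInt1 hInt2
    _ = (∫ z in S, p1 z ∂ν + ∫ z in S, p2 z ∂ν)
        + (∫ z in Sᶜ, q1 z ∂ν + ∫ z in Sᶜ, q2 z ∂ν) := by ring
    _ ≤ I * (fd / r) + 2 * (ν {z : Ed d | 1 < ‖z‖}).toReal * Mc * Mf := by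
        rw [hA]
        exact add_le_add hA_le hfinal2

end Helpers2

/-- Proposition 3.1(1): for `0 < ε₀ ≤ κ ≤ 1`, `f` bounded continuous with
`f(0) = 0`, `C²` on `(0,∞)`, `f' ≥ 0` and `f'' ≤ 0` on `(0,2]`, and `0 < |x−y| ≤ ε₀`:
`L̃ h_f(x,y) ≤ (1/2) J(|x−y|)(f(2|x−y|) − 2f(|x−y|))
  + (∫_{|z|≤1} |c(x,z)−c(y,z)||z|² ν(dz)) f'(|x−y|)/|x−y|
  + 2 ν({|z|>1}) (sup_{x, |z|>1} c(x,z)) ‖f‖_∞`,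
the supremum of `c` and `‖f‖_∞` being represented by arbitrary upper bounds. -/
theorem statement11 {d : ℕ} (hd : 1 ≤ d) (ν : Measure (Ed d)) (hν : IsLevyMeasure ν)
    (c : Ed d → Ed d → ℝ) (cLo cUp : ℝ) (hcLo : 0 < cLo) (hcUp : cLo ≤ cUp)
    (hc_cont : Continuous (fun p : Ed d × Ed d => c p.1 p.2))
    (hc_bound : ∀ x z, cLo ≤ c x z ∧ c x z ≤ cUp)
    (ε₀ κ : ℝ) (hε₀ : 0 < ε₀) (hε₀κ : ε₀ ≤ κ) (hκ1 : κ ≤ 1)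
    (f : ℝ → ℝ) (Mf : ℝ)
    (hf_bdd : ∀ r : ℝ, 0 ≤ r → |f r| ≤ Mf)
    (hf_cont : ContinuousOn f (Set.Ici 0))
    (hf0 : f 0 = 0)
    (hf_smooth : ContDiffOn ℝ 2 f (Set.Ioi 0))
    (hf' : ∀ r : ℝ, 0 < r → r ≤ 2 → 0 ≤ deriv f r)
    (hf'' : ∀ r : ℝ, 0 < r → r ≤ 2 → deriv (deriv f) r ≤ 0)
    (Mc : ℝ) (hMc : ∀ (x z : Ed d), 1 < ‖z‖ → c x z ≤ Mc)
    (x y : Ed d) (hxy : 0 < ‖x - y‖) (hxy' : ‖x - y‖ ≤ ε₀) :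
    LCdist ν c κ f x y + LRdist ν c f x y
      ≤ (1 / 2) * Jfun d ν c ‖x - y‖ * (f (2 * ‖x - y‖) - 2 * f ‖x - y‖)
        + (∫ z in {z : Ed d | ‖z‖ ≤ 1}, |c x z - c y z| * ‖z‖ ^ 2 ∂ν)
          * (deriv f ‖x - y‖ / ‖x - y‖)
        + 2 * (ν {z : Ed d | 1 < ‖z‖}).toReal * Mc * Mf := by
  have hrκ : ‖x - y‖ ≤ κ := le_trans hxy' hε₀κ
  have hr1 : ‖x - y‖ ≤ 1 := le_trans hrκ hκ1
  have hcUp' : ∀ x z, c x z ≤ cUp := fun x z => (hc_bound x z).2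
  have hcb : ∀ x z, 0 ≤ c x z ∧ c x z ≤ cUp := fun x z =>
    ⟨le_trans hcLo.le (hc_bound x z).1, (hc_bound x z).2⟩
  have hLC := LC_eval hν hc_cont hcUp' hf0 x y hxy hrκ
  have hLR := LR_le hν hc_cont hcb hf_bdd hf_cont hf_smooth hf' hf'' hMc x y hxy hr1
  set m : ℝ := ((muXYU ν c x y (x - y)) univ).toReal with hm
  have hJ : Jfun d ν c ‖x - y‖ ≤ m := by
    refine csInf_le ⟨0, ?_⟩ ⟨x, y, rfl, rfl⟩
    rintro w ⟨x', y', -, rfl⟩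
    exact ENNReal.toReal_nonneg
  have hΔ : f (2 * ‖x - y‖) - 2 * f ‖x - y‖ ≤ 0 := by
    have hr2 : ‖x - y‖ ≤ 2 := by linarith
    have h2r : 2 * ‖x - y‖ ≤ 2 := by linarith
    have h1 := tangent_le hf_cont hf_smooth hf'' ‖x - y‖ hxy hr2 (2 * ‖x - y‖)
      (by positivity) h2r
    have h2 := tangent_le hf_cont hf_smooth hf'' ‖x - y‖ hxy hr2 0 le_rfl (by norm_num)
    rw [hf0] at h2
    have e1 : deriv f ‖x - y‖ * (2 * ‖x - y‖ - ‖x - y‖) = deriv f ‖x - y‖ * ‖x - y‖ := by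
      ring
    have e2 : deriv f ‖x - y‖ * (0 - ‖x - y‖) = -(deriv f ‖x - y‖ * ‖x - y‖) := by ring
    rw [e1] at h1
    rw [e2] at h2
    linarith
  have hhalf : (1:ℝ)/2 * m * (f (2 * ‖x - y‖) - 2 * f ‖x - y‖)
      ≤ (1:ℝ)/2 * Jfun d ν c ‖x - y‖ * (f (2 * ‖x - y‖) - 2 * f ‖x - y‖) := by
    have := mul_le_mul_of_nonpos_right hJ hΔ
    linarith
  rw [hLC]
  have := add_le_add hhalf hLR
  linarith


end
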